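/- Let μ be a Borel measure on ℝⁿ, let k be an integer with 1 ≤ k < n, and let ε̄ ≥ 0. Suppose x ∈ ℝⁿ and r > 0 are such that β^k_{μ,2,ε̄}(x,r)² < ∞. Then for every sequence x_i → x in ℝⁿ and every sequence r_i → r of positive reals, β^k_{μ,2,ε̄}(x,r)² ≤ liminf_{i→∞} β^k_{μ,2,ε̄}(x_i,r_i)². In other words, the truncated Jones β-number is lower semicontinuous in (x,r) where it is finite. -/

import Mathlib

open MeasureTheory Metric Filter Set
open scoped ENNReal NNReal Topology Classical

/-- The truncated Jones β-number (squared) of a measure `μ` on `ℝⁿ`: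
`β^k_{μ,2,ε̄}(x,r)²`.  It is `0` when `μ(B_r(x)) ≤ ε̄ · r^k`, and otherwise equals
`inf_V r^{-(k+2)} ∫_{B_r(x)} dist(z,V)² dμ(z)`, the infimum over all affine
`k`-dimensional subspaces `V ⊆ ℝⁿ`. -/
noncomputable def betaSq (n k : ℕ) (μ : Measure (EuclideanSpace ℝ (Fin n))) (ebar : ℝ)
    (x : EuclideanSpace ℝ (Fin n)) (r : ℝ) : ℝ≥0∞ :=
  if μ (Metric.ball x r) ≤ ENNReal.ofReal (ebar * r ^ k) then 0
  else ⨅ (V : AffineSubspace ℝ (EuclideanSpace ℝ (Fin n)))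
      (_ : Module.finrank ℝ V.direction = k),
    (ENNReal.ofReal (r ^ (k + 2)))⁻¹ *
      ∫⁻ z in Metric.ball x r,
        ENNReal.ofReal (Metric.infDist z (V : Set (EuclideanSpace ℝ (Fin n))) ^ 2) ∂μ

/-- The Dini-type integral `∫_a^b β^k_{μ,2,ε̄}(x,r)² dr/r`. -/
noncomputable def diniBeta (n k : ℕ) (μ : Measure (EuclideanSpace ℝ (Fin n))) (ebar : ℝ)
    (x : EuclideanSpace ℝ (Fin n)) (a b : ℝ) : ℝ≥0∞ :=
  ∫⁻ r in Set.Ioc a b, betaSq n k μ ebar x r / ENNReal.ofReal r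

/-- Upper `k`-dimensional density `Θ^{*,k}(μ,x) = limsup_{r→0⁺} μ(B_r(x))/r^k`. -/
noncomputable def upperDensity (n k : ℕ) (μ : Measure (EuclideanSpace ℝ (Fin n)))
    (x : EuclideanSpace ℝ (Fin n)) : ℝ≥0∞ :=
  Filter.limsup (fun r : ℝ => μ (Metric.ball x r) / ENNReal.ofReal (r ^ k)) (𝓝[>] (0:ℝ))

/-- Lower `k`-dimensional density `Θ^k_*(μ,x) = liminf_{r→0⁺} μ(B_r(x))/r^k`. -/
noncomputable def lowerDensity (n k : ℕ) (μ : Measure (EuclideanSpace ℝ (Fin n)))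
    (x : EuclideanSpace ℝ (Fin n)) : ℝ≥0∞ :=
  Filter.liminf (fun r : ℝ => μ (Metric.ball x r) / ENNReal.ofReal (r ^ k)) (𝓝[>] (0:ℝ))

/-- Upper density relative to a covering pair:
`Θ^{*,k}(μ,C,x) = limsup_{r→r_x} μ(B_{r/50}(x))/(r/50)^k`. -/
noncomputable def upperDensityAt (n k : ℕ) (μ : Measure (EuclideanSpace ℝ (Fin n)))
    (rx : ℝ) (x : EuclideanSpace ℝ (Fin n)) : ℝ≥0∞ :=
  Filter.limsup (fun r : ℝ => μ (Metric.ball x (r / 50)) / ENNReal.ofReal ((r / 50) ^ k))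
    (𝓝[>] rx)

/-- Lower density relative to a covering pair:
`Θ^k_*(μ,C,x) = liminf_{r→r_x} μ(B_{r/50}(x))/(r/50)^k`. -/
noncomputable def lowerDensityAt (n k : ℕ) (μ : Measure (EuclideanSpace ℝ (Fin n)))
    (rx : ℝ) (x : EuclideanSpace ℝ (Fin n)) : ℝ≥0∞ :=
  Filter.liminf (fun r : ℝ => μ (Metric.ball x (r / 50)) / ENNReal.ofReal ((r / 50) ^ k))
    (𝓝[>] rx)

/-- A set `S ⊆ ℝⁿ` is `k`-rectifiable if there are countably many Lipschitz maps
`f_i : ℝ^k → ℝⁿ` with `H^k(S \ ⋃ᵢ f_i(ℝ^k)) = 0`. -/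
def IsRectifiableSet (n k : ℕ) (S : Set (EuclideanSpace ℝ (Fin n))) : Prop :=
  ∃ f : ℕ → EuclideanSpace ℝ (Fin k) → EuclideanSpace ℝ (Fin n),
    (∀ i, ∃ L : ℝ≥0, LipschitzWith L (f i)) ∧
    μH[(k : ℝ)] (S \ ⋃ i, Set.range (f i)) = 0

/-- A measure `ν` on `ℝⁿ` is `k`-rectifiable if `ν ≪ H^k` and `ν` vanishes outside some
`k`-rectifiable set. -/
def IsRectifiableMeasure (n k : ℕ) (ν : Measure (EuclideanSpace ℝ (Fin n))) : Prop :=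
  ν ≪ μH[(k : ℝ)] ∧
    ∃ K : Set (EuclideanSpace ℝ (Fin n)), IsRectifiableSet n k K ∧ ν Kᶜ = 0

/-! ### Auxiliary material for Statement 18 -/

section Statement18Aux

variable {n k : ℕ}

/-- Residual of a vector after subtracting its components along a family `u`. -/
noncomputable def residG (u : Fin k → EuclideanSpace ℝ (Fin n))
    (y : EuclideanSpace ℝ (Fin n)) : EuclideanSpace ℝ (Fin n) :=
  y - ∑ j, (inner ℝ (u j) y : ℝ) • u j

lemma inner_residG (u : Fin k → EuclideanSpace ℝ (Fin n)) (hu : Orthonormal ℝ u)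
    (y w : EuclideanSpace ℝ (Fin n)) (hw : w ∈ Submodule.span ℝ (Set.range u)) :
    (inner ℝ (residG u y) w : ℝ) = 0 := by
  have h := orthonormal_iff_ite.mp hu
  have key : ∀ j, (inner ℝ (residG u y) (u j) : ℝ) = 0 := by
    intro j
    simp only [residG, inner_sub_left, sum_inner, real_inner_smul_left]
    rw [Finset.sum_eq_single j]
    · rw [h j j]; simp [real_inner_comm (u j) y]
    · intro i _ hij; rw [h i j]; simp [hij]
    · simp
  have hker : Submodule.span ℝ (Set.range u) ≤
      LinearMap.ker ((innerSL ℝ (residG u y) : EuclideanSpace ℝ (Fin n) →L[ℝ] ℝ) :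
        EuclideanSpace ℝ (Fin n) →ₗ[ℝ] ℝ) :=
    Submodule.span_le.mpr (by rintro _ ⟨j, rfl⟩; simpa [LinearMap.mem_ker] using key j)
  simpa [LinearMap.mem_ker] using hker hw

lemma infDist_frame (u : Fin k → EuclideanSpace ℝ (Fin n)) (hu : Orthonormal ℝ u)
    (p z : EuclideanSpace ℝ (Fin n)) :
    Metric.infDist z
        ((AffineSubspace.mk' p (Submodule.span ℝ (Set.range u)) :
          AffineSubspace ℝ (EuclideanSpace ℝ (Fin n))) : Set (EuclideanSpace ℝ (Fin n)))
      = ‖residG u (z - p)‖ := by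
  set W := Submodule.span ℝ (Set.range u) with hW
  set S := ((AffineSubspace.mk' p W : AffineSubspace ℝ (EuclideanSpace ℝ (Fin n))) :
    Set (EuclideanSpace ℝ (Fin n))) with hS
  have hSne : S.Nonempty := ⟨p, AffineSubspace.self_mem_mk' p W⟩
  have hsum : (∑ j, (inner ℝ (u j) (z - p) : ℝ) • u j) ∈ W :=
    Submodule.sum_mem _ fun j _ => Submodule.smul_mem _ _ (Submodule.subset_span ⟨j, rfl⟩)
  apply le_antisymm
  · have hq : p + ∑ j, (inner ℝ (u j) (z - p) : ℝ) • u j ∈ S := by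
      show _ ∈ AffineSubspace.mk' p W
      rw [AffineSubspace.mem_mk']
      simpa [vsub_eq_sub] using hsum
    calc Metric.infDist z S ≤ dist z (p + ∑ j, (inner ℝ (u j) (z - p) : ℝ) • u j) :=
          Metric.infDist_le_dist_of_mem hq
    _ = ‖residG u (z - p)‖ := by
          rw [dist_eq_norm]; congr 1
          simp only [residG]
          abel
  · refine le_of_not_gt fun hlt => ?_
    obtain ⟨q, hqS, hq⟩ := (Metric.infDist_lt_iff hSne).1 hlt
    have hqW : q - p ∈ W := by
      have hmem : q ∈ AffineSubspace.mk' p W := hqS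
      rw [AffineSubspace.mem_mk'] at hmem
      simpa [vsub_eq_sub] using hmem
    set a := residG u (z - p) with ha
    set bb := (∑ j, (inner ℝ (u j) (z - p) : ℝ) • u j) - (q - p) with hbb
    have hzq : z - q = a + bb := by
      simp only [ha, hbb, residG]
      abel
    have hperp : (inner ℝ a bb : ℝ) = 0 :=
      inner_residG u hu _ _ (Submodule.sub_mem _ hsum hqW)
    have hle : ‖a‖ ≤ ‖a + bb‖ := by
      have h2 := norm_add_sq_real a bb
      rw [hperp] at h2
      nlinarith [norm_nonneg a, norm_nonneg (a + bb), sq_nonneg ‖bb‖]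
    rw [dist_eq_norm, hzq] at hq
    exact absurd hq (not_lt.2 hle)

lemma finrank_span_frame (u : Fin k → EuclideanSpace ℝ (Fin n)) (hu : Orthonormal ℝ u) :
    Module.finrank ℝ (Submodule.span ℝ (Set.range u)) = k := by
  rw [finrank_span_eq_card hu.linearIndependent]
  simp

lemma exists_frame (V : AffineSubspace ℝ (EuclideanSpace ℝ (Fin n)))
    (hV : Module.finrank ℝ V.direction = k) (p : EuclideanSpace ℝ (Fin n)) (hp : p ∈ V) :
    ∃ u : Fin k → EuclideanSpace ℝ (Fin n), Orthonormal ℝ u ∧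
      V = AffineSubspace.mk' p (Submodule.span ℝ (Set.range u)) := by
  let b := (stdOrthonormalBasis ℝ V.direction).reindex (finCongr hV)
  refine ⟨fun j => (b j : EuclideanSpace ℝ (Fin n)), ?_, ?_⟩
  · rw [orthonormal_iff_ite]
    intro i j
    rw [← Submodule.coe_inner]
    exact orthonormal_iff_ite.mp b.orthonormal i j
  · have hb : Submodule.span ℝ (Set.range (⇑b)) = (⊤ : Submodule ℝ V.direction) := by
      rw [← b.coe_toBasis]; exact b.toBasis.span_eq
    have hrange : (Set.range fun j => (b j : EuclideanSpace ℝ (Fin n)))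
        = V.direction.subtype '' Set.range ⇑b := by
      rw [← Set.range_comp]; rfl
    have hspan : Submodule.span ℝ (Set.range fun j => (b j : EuclideanSpace ℝ (Fin n)))
        = V.direction := by
      rw [hrange, Submodule.span_image, hb, Submodule.map_subtype_top]
    rw [hspan, AffineSubspace.mk'_eq hp]

lemma nonempty_of_finrank (hk : 1 ≤ k) (V : AffineSubspace ℝ (EuclideanSpace ℝ (Fin n)))
    (hV : Module.finrank ℝ V.direction = k) :
    ((V : Set (EuclideanSpace ℝ (Fin n)))).Nonempty := by
  rcases (V : Set (EuclideanSpace ℝ (Fin n))).eq_empty_or_nonempty with he | hne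
  · exfalso
    have hbot : V = ⊥ := (AffineSubspace.coe_eq_bot_iff _).1 he
    rw [hbot, AffineSubspace.direction_bot] at hV
    simp [finrank_bot] at hV
    omega
  · exact hne

/-- The (unnormalized) infimum over all affine `k`-planes of `∫_{B_t(x)} dist(z,V)² dμ`. -/
noncomputable def ballInf (n k : ℕ) (μ : Measure (EuclideanSpace ℝ (Fin n)))
    (x : EuclideanSpace ℝ (Fin n)) (t : ℝ) : ℝ≥0∞ :=
  ⨅ (V : AffineSubspace ℝ (EuclideanSpace ℝ (Fin n)))
      (_ : Module.finrank ℝ V.direction = k),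
    ∫⁻ z in Metric.ball x t,
      ENNReal.ofReal (Metric.infDist z (V : Set (EuclideanSpace ℝ (Fin n))) ^ 2) ∂μ

lemma ballInf_mono (n k : ℕ) (μ : Measure (EuclideanSpace ℝ (Fin n)))
    (x : EuclideanSpace ℝ (Fin n)) {t₁ t₂ : ℝ} (h : t₁ ≤ t₂) :
    ballInf n k μ x t₁ ≤ ballInf n k μ x t₂ := by
  simp only [ballInf]
  exact iInf_mono fun V => iInf_mono fun _ =>
    lintegral_mono_set (Metric.ball_subset_ball h)

lemma iInf2_mul_le {ι : Type*} {P : ι → Prop} (f : ι → ℝ≥0∞) (c : ℝ≥0∞)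
    (hc0 : c ≠ 0) (hcT : c ≠ ⊤) (hfin : (⨅ (i) (_ : P i), f i) ≠ ⊤) :
    (⨅ (i) (_ : P i), c * f i) ≤ c * ⨅ (i) (_ : P i), f i := by
  set t := ⨅ (i) (_ : P i), f i with ht
  apply ENNReal.le_of_forall_pos_le_add
  intro ε hε _
  have hε' : ((ε : ℝ≥0∞) / c) ≠ 0 := by
    rw [Ne, ENNReal.div_eq_zero_iff]
    push_neg
    exact ⟨by exact_mod_cast hε.ne', hcT⟩
  obtain ⟨i, hi, hfi⟩ : ∃ i, P i ∧ f i < t + (ε : ℝ≥0∞) / c := by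
    have h1 : t < t + (ε : ℝ≥0∞) / c := ENNReal.lt_add_right hfin hε'
    rw [ht] at h1
    simpa [iInf_lt_iff] using h1
  calc (⨅ (i) (_ : P i), c * f i) ≤ c * f i := iInf₂_le i hi
  _ ≤ c * (t + (ε : ℝ≥0∞) / c) := mul_le_mul_right hfi.le c
  _ = c * t + ε := by rw [mul_add, ENNReal.mul_div_cancel hc0 hcT]

/-- Core compactness lemma: the unnormalized `β`-infimum over `B_r(x)` is bounded by the
supremum of the infima over a sequence of smaller balls `B_{s_m}(x)` with `s_m → r`. -/
lemma ballInf_le_iSup (n k : ℕ) (hk : 1 ≤ k) (μ : Measure (EuclideanSpace ℝ (Fin n)))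
    (x : EuclideanSpace ℝ (Fin n)) (r s₀ : ℝ) (s : ℕ → ℝ)
    (hs₀ : ∀ m, s₀ ≤ s m) (hsr : ∀ m, s m ≤ r)
    (hstend : Filter.Tendsto s Filter.atTop (𝓝 r)) (hμ : μ (Metric.ball x s₀) ≠ 0) :
    ballInf n k μ x r ≤ ⨆ m, ballInf n k μ x (s m) := by
  classical
  set L := ⨆ m, ballInf n k μ x (s m) with hLdef
  by_cases hL : L = ⊤
  · rw [hL]; exact le_top
  set δ : ℕ → ℝ≥0∞ := fun m => ((m : ℝ≥0∞) + 1)⁻¹ with hδdef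
  have hδ0 : ∀ m, δ m ≠ 0 := by
    intro m
    simp only [hδdef, Ne, ENNReal.inv_eq_zero]
    exact (ENNReal.add_lt_top.2 ⟨ENNReal.natCast_lt_top m, ENNReal.one_lt_top⟩).ne
  have hδ1 : ∀ m, δ m ≤ 1 := by
    intro m
    simp only [hδdef]
    rw [ENNReal.inv_le_one]
    exact le_add_self
  have hVm : ∀ m, ∃ V : AffineSubspace ℝ (EuclideanSpace ℝ (Fin n)),
      Module.finrank ℝ V.direction = k ∧
      (∫⁻ z in Metric.ball x (s m),
        ENNReal.ofReal (Metric.infDist z (V : Set (EuclideanSpace ℝ (Fin n))) ^ 2) ∂μ)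
        < L + δ m := by
    intro m
    have h1 : ballInf n k μ x (s m) < L + δ m :=
      lt_of_le_of_lt (le_iSup (fun m => ballInf n k μ x (s m)) m)
        (ENNReal.lt_add_right hL (hδ0 m))
    simpa [ballInf, iInf_lt_iff] using h1
  choose V hVrk hVint using hVm
  have hVne : ∀ m, ((V m : Set (EuclideanSpace ℝ (Fin n)))).Nonempty :=
    fun m => nonempty_of_finrank hk (V m) (hVrk m)
  -- Chebyshev-type point selection
  set a : ℝ≥0∞ := min (μ (Metric.ball x s₀)) 1 with hadef
  have ha0 : a ≠ 0 := by
    have : 0 < min (μ (Metric.ball x s₀)) 1 :=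
      lt_min (pos_iff_ne_zero.2 hμ) one_pos
    exact this.ne'
  have haT : a ≠ ⊤ := ((min_le_right _ _).trans_lt ENNReal.one_lt_top).ne
  set t : ℝ≥0∞ := (L + 2) / a with htdef
  have hL2 : (L + 2) ≠ ⊤ := ENNReal.add_ne_top.2 ⟨hL, ENNReal.ofNat_ne_top⟩
  have htT : t ≠ ⊤ := (ENNReal.div_lt_top hL2 ha0).ne
  have hpt : ∀ m, ∃ z₀ ∈ Metric.ball x s₀,
      ENNReal.ofReal (Metric.infDist z₀ (V m : Set (EuclideanSpace ℝ (Fin n))) ^ 2) < t := by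
    intro m
    by_contra hcon
    push_neg at hcon
    have hlow : t * μ (Metric.ball x s₀) ≤ ∫⁻ z in Metric.ball x s₀,
        ENNReal.ofReal (Metric.infDist z (V m : Set (EuclideanSpace ℝ (Fin n))) ^ 2) ∂μ := by
      rw [← setLIntegral_const]
      exact setLIntegral_mono
        ((ENNReal.continuous_ofReal.comp
          ((Metric.continuous_infDist_pt _).pow 2)).measurable) hcon
    have h2 : L + 2 ≤ ∫⁻ z in Metric.ball x s₀,
        ENNReal.ofReal (Metric.infDist z (V m : Set (EuclideanSpace ℝ (Fin n))) ^ 2) ∂μ := by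
      calc L + 2 = t * a := (ENNReal.div_mul_cancel ha0 haT).symm
      _ ≤ t * μ (Metric.ball x s₀) := mul_le_mul_right (min_le_left _ _) t
      _ ≤ _ := hlow
    have h3 : (∫⁻ z in Metric.ball x s₀,
        ENNReal.ofReal (Metric.infDist z (V m : Set (EuclideanSpace ℝ (Fin n))) ^ 2) ∂μ)
        ≤ ∫⁻ z in Metric.ball x (s m),
        ENNReal.ofReal (Metric.infDist z (V m : Set (EuclideanSpace ℝ (Fin n))) ^ 2) ∂μ :=
      lintegral_mono_set (Metric.ball_subset_ball (hs₀ m))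
    have h4 : (∫⁻ z in Metric.ball x (s m),
        ENNReal.ofReal (Metric.infDist z (V m : Set (EuclideanSpace ℝ (Fin n))) ^ 2) ∂μ)
        < L + 2 :=
      (hVint m).trans_le (add_le_add_right ((hδ1 m).trans one_le_two) L)
    exact absurd ((h2.trans h3).trans_lt h4) (lt_irrefl _)
  choose z₀ hz₀ball hz₀lt using hpt
  set T := t.toReal with hTdef
  have hdistT : ∀ m, Metric.infDist (z₀ m) (V m : Set (EuclideanSpace ℝ (Fin n)))
      ≤ Real.sqrt T := by
    intro m
    have h1 : Metric.infDist (z₀ m) (V m : Set (EuclideanSpace ℝ (Fin n))) ^ 2 ≤ T := by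
      have h := hz₀lt m
      rw [ENNReal.ofReal_lt_iff_lt_toReal (sq_nonneg _) htT] at h
      exact h.le
    exact (Real.le_sqrt Metric.infDist_nonneg ENNReal.toReal_nonneg).2 h1
  have hq : ∀ m, ∃ q ∈ (V m : Set (EuclideanSpace ℝ (Fin n))),
      dist (z₀ m) q < Real.sqrt T + 1 :=
    fun m => (Metric.infDist_lt_iff (hVne m)).1 ((hdistT m).trans_lt (lt_add_one _))
  choose p hpV hpdist using hq
  set R := s₀ + (Real.sqrt T + 1) with hRdef
  have hpball : ∀ m, p m ∈ Metric.closedBall x R := by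
    intro m
    rw [Metric.mem_closedBall]
    have h1 : dist (p m) x ≤ dist (p m) (z₀ m) + dist (z₀ m) x := dist_triangle _ _ _
    have h2 : dist (z₀ m) x < s₀ := Metric.mem_ball.1 (hz₀ball m)
    have h3 : dist (p m) (z₀ m) < Real.sqrt T + 1 := by
      rw [dist_comm]; exact hpdist m
    linarith
  have hfr : ∀ m, ∃ u : Fin k → EuclideanSpace ℝ (Fin n), Orthonormal ℝ u ∧
      V m = AffineSubspace.mk' (p m) (Submodule.span ℝ (Set.range u)) :=
    fun m => exists_frame (V m) (hVrk m) (p m) (hpV m)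
  choose u huON hVeq using hfr
  -- Compactness of frames
  have hOclosed : IsClosed {v : Fin k → EuclideanSpace ℝ (Fin n) | Orthonormal ℝ v} := by
    have heq : {v : Fin k → EuclideanSpace ℝ (Fin n) | Orthonormal ℝ v} =
        ⋂ (i : Fin k) (j : Fin k),
          {v : Fin k → EuclideanSpace ℝ (Fin n) |
            (inner ℝ (v i) (v j) : ℝ) = if i = j then 1 else 0} := by
      ext v
      simp only [Set.mem_setOf_eq, Set.mem_iInter, orthonormal_iff_ite]
    rw [heq]
    exact isClosed_iInter fun i => isClosed_iInter fun j =>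
      isClosed_eq (Continuous.inner (continuous_apply i) (continuous_apply j))
        continuous_const
  have hK2 : IsCompact ({v : Fin k → EuclideanSpace ℝ (Fin n) | Orthonormal ℝ v}
      ∩ Metric.closedBall 0 1) :=
    (isCompact_closedBall _ _).inter_left hOclosed
  have hKcomp : IsCompact ((Metric.closedBall x R) ×ˢ
      ({v : Fin k → EuclideanSpace ℝ (Fin n) | Orthonormal ℝ v} ∩ Metric.closedBall 0 1)) :=
    (isCompact_closedBall _ _).prod hK2
  have hmem : ∀ m, (p m, u m) ∈ (Metric.closedBall x R) ×ˢ
      ({v : Fin k → EuclideanSpace ℝ (Fin n) | Orthonormal ℝ v} ∩ Metric.closedBall 0 1) := by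
    intro m
    refine ⟨hpball m, huON m, ?_⟩
    rw [Metric.mem_closedBall, dist_zero_right]
    exact (pi_norm_le_iff_of_nonneg zero_le_one).2 fun j => le_of_eq ((huON m).1 j)
  obtain ⟨⟨pl, ul⟩, hmeml, φ, hφmono, hφtend⟩ := hKcomp.tendsto_subseq hmem
  have hulON : Orthonormal ℝ ul := hmeml.2.1
  set Vl := AffineSubspace.mk' pl (Submodule.span ℝ (Set.range ul)) with hVldef
  have hVlrk : Module.finrank ℝ Vl.direction = k := by
    rw [hVldef, AffineSubspace.direction_mk']
    exact finrank_span_frame ul hulON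
  -- pointwise convergence of distances
  have hzlim : ∀ z : EuclideanSpace ℝ (Fin n),
      Filter.Tendsto (fun m => ENNReal.ofReal
          (Metric.infDist z (V (φ m) : Set (EuclideanSpace ℝ (Fin n))) ^ 2)) Filter.atTop
        (𝓝 (ENNReal.ofReal
          (Metric.infDist z (Vl : Set (EuclideanSpace ℝ (Fin n))) ^ 2))) := by
    intro z
    have hcont : Continuous (fun y :
        (EuclideanSpace ℝ (Fin n)) × (Fin k → EuclideanSpace ℝ (Fin n)) =>
        ENNReal.ofReal (‖residG y.2 (z - y.1)‖ ^ 2)) := by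
      apply ENNReal.continuous_ofReal.comp
      apply Continuous.pow
      apply Continuous.norm
      show Continuous fun y :
          (EuclideanSpace ℝ (Fin n)) × (Fin k → EuclideanSpace ℝ (Fin n)) =>
          (z - y.1) - ∑ j, (inner ℝ (y.2 j) (z - y.1) : ℝ) • y.2 j
      exact (continuous_const.sub continuous_fst).sub (continuous_finset_sum _ fun j _ =>
        by fun_prop)
    have h1 := (hcont.tendsto (pl, ul)).comp hφtend
    have h2 : ENNReal.ofReal (‖residG ul (z - pl)‖ ^ 2)
        = ENNReal.ofReal (Metric.infDist z (Vl : Set (EuclideanSpace ℝ (Fin n))) ^ 2) := by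
      rw [hVldef, infDist_frame ul hulON pl z]
    rw [h2] at h1
    refine h1.congr fun m => ?_
    simp only [Function.comp]
    rw [hVeq (φ m), infDist_frame (u (φ m)) (huON (φ m))]
  -- Fatou argument
  set g : EuclideanSpace ℝ (Fin n) → ℝ≥0∞ := fun z =>
    ENNReal.ofReal (Metric.infDist z (Vl : Set (EuclideanSpace ℝ (Fin n))) ^ 2) with hgdef
  set f : ℕ → EuclideanSpace ℝ (Fin n) → ℝ≥0∞ := fun m z =>
    (Metric.ball x (s (φ m))).indicator (fun z' =>
      ENNReal.ofReal (Metric.infDist z' (V (φ m) : Set (EuclideanSpace ℝ (Fin n))) ^ 2)) z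
    with hfdef
  have hfmeas : ∀ m, Measurable (f m) := fun m =>
    ((ENNReal.continuous_ofReal.comp
      ((Metric.continuous_infDist_pt _).pow 2)).measurable).indicator measurableSet_ball
  have hgle : ∀ z, (Metric.ball x r).indicator g z ≤
      Filter.liminf (fun m => f m z) Filter.atTop := by
    intro z
    by_cases hz : z ∈ Metric.ball x r
    · rw [Set.indicator_of_mem hz]
      have hsφ : Filter.Tendsto (fun m => s (φ m)) Filter.atTop (𝓝 r) :=
        hstend.comp hφmono.tendsto_atTop
      have hzev : ∀ᶠ m in Filter.atTop, f m z =
          ENNReal.ofReal (Metric.infDist z (V (φ m) : Set (EuclideanSpace ℝ (Fin n))) ^ 2) := by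
        filter_upwards [hsφ.eventually_const_lt (Metric.mem_ball.1 hz)] with m hm
        exact Set.indicator_of_mem (Metric.mem_ball.2 hm) _
      have htendf : Filter.Tendsto (fun m => f m z) Filter.atTop (𝓝 (g z)) :=
        Filter.Tendsto.congr' (by filter_upwards [hzev] with m hm using hm.symm) (hzlim z)
      exact htendf.liminf_eq.ge
    · rw [Set.indicator_of_notMem hz]
      exact zero_le
  have hbound : ∀ m, (∫⁻ z, f m z ∂μ) ≤ L + δ (φ m) := by
    intro m
    rw [hfdef]
    rw [lintegral_indicator measurableSet_ball]
    exact (hVint (φ m)).le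
  have hδtend : Filter.Tendsto δ Filter.atTop (𝓝 0) := by
    have h1 : Filter.Tendsto (fun m : ℕ => (((m + 1 : ℕ)) : ℝ≥0∞)⁻¹) Filter.atTop (𝓝 0) :=
      ENNReal.tendsto_inv_nat_nhds_zero.comp (tendsto_add_atTop_nat 1)
    refine h1.congr fun m => ?_
    simp [hδdef]
  have hlimL : Filter.Tendsto (fun m => L + δ (φ m)) Filter.atTop (𝓝 L) := by
    have h := Filter.Tendsto.const_add L (hδtend.comp hφmono.tendsto_atTop)
    simpa using h
  have hkey : (∫⁻ z in Metric.ball x r, g z ∂μ) ≤ L := by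
    calc (∫⁻ z in Metric.ball x r, g z ∂μ)
        = ∫⁻ z, (Metric.ball x r).indicator g z ∂μ :=
          (lintegral_indicator measurableSet_ball g).symm
    _ ≤ ∫⁻ z, Filter.liminf (fun m => f m z) Filter.atTop ∂μ := lintegral_mono hgle
    _ ≤ Filter.liminf (fun m => ∫⁻ z, f m z ∂μ) Filter.atTop := lintegral_liminf_le hfmeas
    _ ≤ Filter.liminf (fun m => L + δ (φ m)) Filter.atTop :=
          Filter.liminf_le_liminf (Filter.Eventually.of_forall hbound)
    _ = L := hlimL.liminf_eq
  calc ballInf n k μ x r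
      ≤ ∫⁻ z in Metric.ball x r, g z ∂μ := by
        simp only [ballInf]
        exact iInf₂_le Vl hVlrk
  _ ≤ L := hkey

end Statement18Aux

/-- Lemma 4.4: lower semicontinuity of the truncated `β₂`-number in
`(x, r)` at points where it is finite. -/
theorem statement18 (n k : ℕ) (hk : 1 ≤ k) (hkn : k < n)
    (μ : Measure (EuclideanSpace ℝ (Fin n))) (ebar : ℝ) (hebar : 0 ≤ ebar)
    (x : EuclideanSpace ℝ (Fin n)) (r : ℝ) (hr : 0 < r)
    (hfin : betaSq n k μ ebar x r ≠ ⊤)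
    (xi : ℕ → EuclideanSpace ℝ (Fin n)) (ri : ℕ → ℝ) (hri : ∀ i, 0 < ri i)
    (hxi : Filter.Tendsto xi Filter.atTop (𝓝 x))
    (hritend : Filter.Tendsto ri Filter.atTop (𝓝 r)) :
    betaSq n k μ ebar x r
      ≤ Filter.liminf (fun i => betaSq n k μ ebar (xi i) (ri i)) Filter.atTop := by
  by_cases hcond : μ (Metric.ball x r) ≤ ENNReal.ofReal (ebar * r ^ k)
  · rw [betaSq, if_pos hcond]; exact zero_le
  push_neg at hcond
  set c : ℝ≥0∞ := (ENNReal.ofReal (r ^ (k + 2)))⁻¹ with hcdef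
  have hrpow : 0 < r ^ (k + 2) := pow_pos hr _
  have hc0 : c ≠ 0 := by
    rw [hcdef, Ne, ENNReal.inv_eq_zero]
    exact ENNReal.ofReal_ne_top
  have hcT : c ≠ ⊤ := by
    rw [hcdef, Ne, ENNReal.inv_eq_top]
    exact (ENNReal.ofReal_pos.2 hrpow).ne'
  have hbeta : betaSq n k μ ebar x r =
      ⨅ (V : AffineSubspace ℝ (EuclideanSpace ℝ (Fin n)))
        (_ : Module.finrank ℝ V.direction = k),
      c * ∫⁻ z in Metric.ball x r,
        ENNReal.ofReal (Metric.infDist z (V : Set (EuclideanSpace ℝ (Fin n))) ^ 2) ∂μ := by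
    rw [betaSq, if_neg (not_le.2 hcond)]
  -- choose s₀ < r with large measure
  set tseq : ℕ → ℝ := fun m => r - r * (1 / (m + 1)) with htseqdef
  have htlt : ∀ m, tseq m ≤ r := by
    intro m
    have h1 : 0 ≤ r * (1 / ((m : ℝ) + 1)) := by positivity
    simp only [htseqdef]
    linarith
  have httend : Filter.Tendsto tseq Filter.atTop (𝓝 r) := by
    have h0 : Filter.Tendsto (fun m : ℕ => 1 / ((m : ℝ) + 1)) Filter.atTop (𝓝 0) :=
      tendsto_one_div_add_atTop_nhds_zero_nat
    have h1 := (tendsto_const_nhds : Filter.Tendsto (fun _ : ℕ => r) Filter.atTop (𝓝 r)).sub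
      (h0.const_mul r)
    rw [htseqdef]
    simpa [one_div] using h1
  have hunion : Metric.ball x r = ⋃ m, Metric.ball x (tseq m) := by
    ext z
    simp only [Metric.mem_ball, Set.mem_iUnion]
    constructor
    · intro hz
      exact (httend.eventually_const_lt hz).exists
    · rintro ⟨m, hm⟩
      exact hm.trans_le (htlt m)
  have hdir : Directed (· ⊆ ·) fun m => Metric.ball x (tseq m) := by
    refine Monotone.directed_le fun m m' hmm => Metric.ball_subset_ball ?_
    have h1 : 1 / ((m' : ℝ) + 1) ≤ 1 / ((m : ℝ) + 1) := by
      apply one_div_le_one_div_of_le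
      · positivity
      · exact_mod_cast add_le_add_left (Nat.cast_le.2 hmm) 1
    simp only [htseqdef]
    nlinarith [hr.le]
  obtain ⟨m₀, hm₀⟩ : ∃ m, ENNReal.ofReal (ebar * r ^ k) < μ (Metric.ball x (tseq m)) := by
    have h1 := hcond
    rw [hunion, Directed.measure_iUnion hdir] at h1
    exact lt_iSup_iff.1 h1
  set s₀ := tseq m₀ with hs₀def
  have hs₀ltr : s₀ < r := by
    have h1 : 0 < r * (1 / ((m₀ : ℝ) + 1)) := by positivity
    simp only [hs₀def, htseqdef]
    linarith
  have hμs₀ : μ (Metric.ball x s₀) ≠ 0 := (lt_of_le_of_lt (zero_le) hm₀).ne'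
  -- the increasing sequence of radii
  set s : ℕ → ℝ := fun m => r - (r - s₀) * (1 / (m + 1)) with hsdef
  have hs₀s : ∀ m, s₀ ≤ s m := by
    intro m
    have h1 : (r - s₀) * (1 / ((m : ℝ) + 1)) ≤ (r - s₀) * 1 := by
      apply mul_le_mul_of_nonneg_left _ (by linarith)
      rw [div_le_one (by positivity)]
      have : (0:ℝ) ≤ (m : ℝ) := Nat.cast_nonneg m
      linarith
    simp only [hsdef]
    linarith
  have hsltr : ∀ m, s m < r := by
    intro m
    have h1 : 0 < (r - s₀) * (1 / ((m : ℝ) + 1)) := by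
      apply mul_pos (by linarith)
      positivity
    simp only [hsdef]
    linarith
  have hsr : ∀ m, s m ≤ r := fun m => (hsltr m).le
  have hstend : Filter.Tendsto s Filter.atTop (𝓝 r) := by
    have h0 : Filter.Tendsto (fun m : ℕ => 1 / ((m : ℝ) + 1)) Filter.atTop (𝓝 0) :=
      tendsto_one_div_add_atTop_nhds_zero_nat
    have h1 := (tendsto_const_nhds : Filter.Tendsto (fun _ : ℕ => r) Filter.atTop (𝓝 r)).sub
      (h0.const_mul (r - s₀))
    rw [hsdef]
    simpa [one_div] using h1
  -- finiteness of the unnormalized infimum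
  have hIfin : ballInf n k μ x r ≠ ⊤ := by
    intro htop
    apply hfin
    have hall : ∀ (V : AffineSubspace ℝ (EuclideanSpace ℝ (Fin n))),
        Module.finrank ℝ V.direction = k →
        (∫⁻ z in Metric.ball x r,
          ENNReal.ofReal (Metric.infDist z (V : Set (EuclideanSpace ℝ (Fin n))) ^ 2) ∂μ) = ⊤ := by
      have h1 := htop
      simp only [ballInf, iInf_eq_top] at h1
      exact h1
    rw [hbeta, iInf_eq_top]
    intro V
    rw [iInf_eq_top]
    intro hV
    rw [hall V hV, ENNReal.mul_top hc0]
  -- step (A): betaSq ≤ c * ballInf r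
  have hA : betaSq n k μ ebar x r ≤ c * ballInf n k μ x r := by
    rw [hbeta]
    have := iInf2_mul_le
      (P := fun V : AffineSubspace ℝ (EuclideanSpace ℝ (Fin n)) =>
        Module.finrank ℝ V.direction = k)
      (fun V => ∫⁻ z in Metric.ball x r,
        ENNReal.ofReal (Metric.infDist z (V : Set (EuclideanSpace ℝ (Fin n))) ^ 2) ∂μ)
      c hc0 hcT (by simpa only [ballInf] using hIfin)
    simpa only [ballInf] using this
  -- step (B): core compactness lemma
  have hB := ballInf_le_iSup n k hk μ x r s₀ s hs₀s hsr hstend hμs₀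
  -- step (C): liminf lower bound for each m
  have hC : ∀ m, c * ballInf n k μ x (s m) ≤
      Filter.liminf (fun i => betaSq n k μ ebar (xi i) (ri i)) Filter.atTop := by
    intro m
    set ci : ℕ → ℝ≥0∞ := fun i => (ENNReal.ofReal (ri i ^ (k + 2)))⁻¹ with hcidef
    have hcitend : Filter.Tendsto ci Filter.atTop (𝓝 c) := by
      rw [hcdef]
      apply ENNReal.tendsto_inv_iff.2
      exact (ENNReal.continuous_ofReal.tendsto _).comp (hritend.pow (k + 2))
    have hdist0 : Filter.Tendsto (fun i => dist (xi i) x) Filter.atTop (𝓝 0) := by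
      have h1 := hxi.dist (tendsto_const_nhds :
        Filter.Tendsto (fun _ : ℕ => x) Filter.atTop (𝓝 x))
      simpa using h1
    have hgap : Filter.Tendsto (fun i => ri i - dist (xi i) x) Filter.atTop (𝓝 r) := by
      have h1 := hritend.sub hdist0
      simpa using h1
    have hthr : Filter.Tendsto (fun i => ENNReal.ofReal (ebar * ri i ^ k)) Filter.atTop
        (𝓝 (ENNReal.ofReal (ebar * r ^ k))) :=
      (ENNReal.continuous_ofReal.tendsto _).comp ((hritend.pow k).const_mul ebar)
    have hev : ∀ᶠ i in Filter.atTop,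
        ci i * ballInf n k μ x (s m) ≤ betaSq n k μ ebar (xi i) (ri i) := by
      filter_upwards [hgap.eventually_const_lt (hsltr m), hthr.eventually_lt_const hm₀]
        with i hi1 hi2
      have hsub : Metric.ball x (s m) ⊆ Metric.ball (xi i) (ri i) := by
        intro z hz
        rw [Metric.mem_ball] at hz ⊢
        have h1 : dist z (xi i) ≤ dist z x + dist x (xi i) := dist_triangle _ _ _
        have h2 : dist x (xi i) = dist (xi i) x := dist_comm _ _
        linarith
      have hmes : ¬ (μ (Metric.ball (xi i) (ri i)) ≤ ENNReal.ofReal (ebar * ri i ^ k)) := by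
        apply not_le.2
        calc ENNReal.ofReal (ebar * ri i ^ k) < μ (Metric.ball x s₀) := hi2
        _ ≤ μ (Metric.ball (xi i) (ri i)) :=
            measure_mono ((Metric.ball_subset_ball (hs₀s m)).trans hsub)
      rw [betaSq, if_neg hmes]
      refine le_iInf fun W => le_iInf fun hW => ?_
      refine mul_le_mul_right ?_ _
      calc ballInf n k μ x (s m)
          ≤ ∫⁻ z in Metric.ball x (s m),
              ENNReal.ofReal (Metric.infDist z (W : Set (EuclideanSpace ℝ (Fin n))) ^ 2) ∂μ := by
            simp only [ballInf]
            exact iInf₂_le W hW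
      _ ≤ ∫⁻ z in Metric.ball (xi i) (ri i),
            ENNReal.ofReal (Metric.infDist z (W : Set (EuclideanSpace ℝ (Fin n))) ^ 2) ∂μ :=
          lintegral_mono_set hsub
    have hlim2 : Filter.Tendsto (fun i => ci i * ballInf n k μ x (s m)) Filter.atTop
        (𝓝 (c * ballInf n k μ x (s m))) :=
      ENNReal.Tendsto.mul_const hcitend (Or.inl hc0)
    calc c * ballInf n k μ x (s m)
        = Filter.liminf (fun i => ci i * ballInf n k μ x (s m)) Filter.atTop :=
          hlim2.liminf_eq.symm
    _ ≤ Filter.liminf (fun i => betaSq n k μ ebar (xi i) (ri i)) Filter.atTop :=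
          Filter.liminf_le_liminf hev
  calc betaSq n k μ ebar x r ≤ c * ballInf n k μ x r := hA
  _ ≤ c * ⨆ m, ballInf n k μ x (s m) := mul_le_mul_right hB c
  _ = ⨆ m, c * ballInf n k μ x (s m) := ENNReal.mul_iSup c _
  _ ≤ Filter.liminf (fun i => betaSq n k μ ebar (xi i) (ri i)) Filter.atTop := iSup_le hC
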